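/- arXiv:1904.08855 — 2 statements merged into one kernel-verified Lean document; each statement's English description precedes it below -/
import Mathlib

section
/- Suppose the load vector S satisfies ξ − η = 1. Define the scalar function f : [0,1] → ℝ by f(λ) := γ(λ) + 2λ²ξη, where γ(λ) := max_i ( 2λ(ξ_i + Re(η_i)) − λ²(ξ_i² + |η_i|²) ) is the value of the stress measure γ evaluated at the scaled load λ·S. Then f is monotonically nondecreasing on [0,1] (i.e., 0 ≤ λ₁ ≤ λ₂ ≤ 1 implies f(λ₁) ≤ f(λ₂)), and f(1) ≥ 1. -/
open Complex

/-- `η_i := Σ_j Ẑ_{ij} · conj(S_j)` -/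
noncomputable def etaI {n : ℕ} (Z : Matrix (Fin n) (Fin n) ℂ) (S : Fin n → ℂ) (i : Fin n) : ℂ :=
  ∑ j, Z i j * (starRingEnd ℂ) (S j)

/-- `ξ_i := Σ_j |Ẑ_{ij} · S_j|` -/
noncomputable def xiI {n : ℕ} (Z : Matrix (Fin n) (Fin n) ℂ) (S : Fin n → ℂ) (i : Fin n) : ℝ :=
  ∑ j, ‖Z i j * S j‖

/-- `γ_i := 2(ξ_i + Re η_i) − ξ_i² − |η_i|²` -/
noncomputable def gammaI {n : ℕ} (Z : Matrix (Fin n) (Fin n) ℂ) (S : Fin n → ℂ) (i : Fin n) : ℝ :=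
  2 * (xiI Z S i + (etaI Z S i).re) - (xiI Z S i) ^ 2 - (‖etaI Z S i‖) ^ 2

/-- `η := max_i |η_i|` -/
noncomputable def etaMax {n : ℕ} (Z : Matrix (Fin n) (Fin n) ℂ) (S : Fin n → ℂ) : ℝ :=
  ⨆ i, ‖etaI Z S i‖

/-- `ξ := max_i ξ_i` -/
noncomputable def xiMax {n : ℕ} (Z : Matrix (Fin n) (Fin n) ℂ) (S : Fin n → ℂ) : ℝ :=
  ⨆ i, xiI Z S i

/-- `γ := max_i γ_i` -/
noncomputable def gammaMax {n : ℕ} (Z : Matrix (Fin n) (Fin n) ℂ) (S : Fin n → ℂ) : ℝ :=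
  ⨆ i, gammaI Z S i

/-- `r̲ := sqrt((1−γ − sqrt((1−γ)² − 4ξ²η²))/(2ξ²))` -/
noncomputable def rLow {n : ℕ} (Z : Matrix (Fin n) (Fin n) ℂ) (S : Fin n → ℂ) : ℝ :=
  Real.sqrt ((1 - gammaMax Z S -
      Real.sqrt ((1 - gammaMax Z S) ^ 2 - 4 * (xiMax Z S) ^ 2 * (etaMax Z S) ^ 2)) /
    (2 * (xiMax Z S) ^ 2))

/-- `r̄ := sqrt((1−γ + sqrt((1−γ)² − 4ξ²η²))/(2ξ²))` -/
noncomputable def rHigh {n : ℕ} (Z : Matrix (Fin n) (Fin n) ℂ) (S : Fin n → ℂ) : ℝ :=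
  Real.sqrt ((1 - gammaMax Z S +
      Real.sqrt ((1 - gammaMax Z S) ^ 2 - 4 * (xiMax Z S) ^ 2 * (etaMax Z S) ^ 2)) /
    (2 * (xiMax Z S) ^ 2))

/-- the fixed point power flow map `F(v)_i := 1 − Σ_j Ẑ_{ij}·conj(S_j)/conj(v_j)` -/
noncomputable def pfMap {n : ℕ} (Z : Matrix (Fin n) (Fin n) ℂ) (S : Fin n → ℂ)
    (v : Fin n → ℂ) : Fin n → ℂ :=
  fun i => 1 - ∑ j, Z i j * (starRingEnd ℂ) (S j) / (starRingEnd ℂ) (v j)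

/-- `f(λ) := γ(λ·S) + 2λ²ξη` where `γ(λ·S) = max_i (2λ(ξ_i + Re η_i) − λ²(ξ_i² + |η_i|²))`. -/
noncomputable def fScale {n : ℕ} (Z : Matrix (Fin n) (Fin n) ℂ) (S : Fin n → ℂ) (l : ℝ) : ℝ :=
  (⨆ i, (2 * l * (xiI Z S i + (etaI Z S i).re)
      - l ^ 2 * ((xiI Z S i) ^ 2 + (‖etaI Z S i‖) ^ 2)))
    + 2 * l ^ 2 * xiMax Z S * etaMax Z S

/-! Moving the term `2λ²ξη` inside the maximum writes `f` as a maximum over the buses of the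
quadratics `q_i(λ) = 2λ b_i − λ² a_i` with `b_i = ξ_i + Re η_i` and
`a_i = ξ_i² + |η_i|² − 2ξη`. The slope `2(b_i − λ a_i)` is affine in `λ`, nonnegative at `λ = 0`
because `Re η_i ≥ −|η_i| ≥ −ξ_i`, and nonnegative at `λ = 1` because `ξ = 1 + η`; so every `q_i`,
and hence `f`, is nondecreasing on `[0, 1]`. At `λ = 1`, a bus with `ξ_i = ξ` gives
`q_i(1) ≥ (1 + η)² − (1 + |η_i|)² + 1 ≥ 1`. -/

lemma monotoneOn_two_mul_mul_sub_sq_mul {a b : ℝ} (hb : 0 ≤ b) (hab : a ≤ b) :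
    MonotoneOn (fun l : ℝ => 2 * l * b - l ^ 2 * a) (Set.Icc 0 1) := by
  rintro l₁ ⟨hl₁, -⟩ l₂ ⟨-, hl₂⟩ hl
  -- `2b - s a` is a convex combination of `2b ≥ 0` and `2(b - a) ≥ 0` for `s = l₁ + l₂ ∈ [0, 2]`
  have hslope : 0 ≤ 2 * b - (l₁ + l₂) * a := by
    nlinarith [mul_nonneg (by linarith : (0 : ℝ) ≤ 2 - (l₁ + l₂)) hb,
      mul_nonneg (by linarith : (0 : ℝ) ≤ l₁ + l₂) (sub_nonneg.2 hab)]
  nlinarith [mul_nonneg (sub_nonneg.2 hl) hslope]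

theorem MonotoneOn.ciSup {ι α β : Type*} [Finite ι] [Preorder α]
    [ConditionallyCompleteLattice β] {s : Set α} {f : ι → α → β}
    (hf : ∀ i, MonotoneOn (f i) s) : MonotoneOn (fun x => ⨆ i, f i x) s :=
  fun _ hx _ hy hxy => ciSup_mono (Set.finite_range _).bddAbove fun i => hf i hx hy hxy

section

variable {n : ℕ} (Z : Matrix (Fin n) (Fin n) ℂ) (S : Fin n → ℂ)

lemma xiI_nonneg (i : Fin n) : 0 ≤ xiI Z S i :=
  Finset.sum_nonneg fun _ _ => norm_nonneg _

lemma norm_etaI_le_xiI (i : Fin n) : ‖etaI Z S i‖ ≤ xiI Z S i :=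
  (norm_sum_le _ _).trans_eq <| Finset.sum_congr rfl fun j _ => by
    rw [norm_mul, norm_mul, Complex.norm_conj]

lemma xiI_le_xiMax (i : Fin n) : xiI Z S i ≤ xiMax Z S :=
  le_ciSup (Set.finite_range _).bddAbove i

lemma norm_etaI_le_etaMax (i : Fin n) : ‖etaI Z S i‖ ≤ etaMax Z S :=
  le_ciSup (f := fun i => ‖etaI Z S i‖) (Set.finite_range _).bddAbove i

lemma neg_norm_etaI_le_re (i : Fin n) : -‖etaI Z S i‖ ≤ (etaI Z S i).re :=
  neg_le_of_abs_le (Complex.abs_re_le_norm _)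

noncomputable def fScaleBranch (i : Fin n) (l : ℝ) : ℝ :=
  2 * l * (xiI Z S i + (etaI Z S i).re)
    - l ^ 2 * ((xiI Z S i) ^ 2 + ‖etaI Z S i‖ ^ 2 - 2 * xiMax Z S * etaMax Z S)

lemma fScale_eq_iSup_fScaleBranch [Nonempty (Fin n)] (l : ℝ) :
    fScale Z S l = ⨆ i, fScaleBranch Z S i l := by
  rw [fScale, ciSup_add (Set.finite_range _).bddAbove]
  congr 1 with i
  rw [fScaleBranch]
  ring

variable {Z S}

lemma monotoneOn_fScaleBranch (hxe : xiMax Z S - etaMax Z S = 1) (i : Fin n) :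
    MonotoneOn (fScaleBranch Z S i) (Set.Icc 0 1) := by
  have hx := xiI_nonneg Z S i
  have hy := norm_nonneg (etaI Z S i)
  have hyx := norm_etaI_le_xiI Z S i
  have hxξ := xiI_le_xiMax Z S i
  have hyη := norm_etaI_le_etaMax Z S i
  have hre := neg_norm_etaI_le_re Z S i
  refine monotoneOn_two_mul_mul_sub_sq_mul (by linarith) ?_
  -- with `ξ = 1 + η`: `x - x² ≥ -xη ≥ -ξη` and `-y - y² ≥ -η - η² = -ξη`
  nlinarith [mul_nonneg (sub_nonneg.2 hxξ) hx,
    mul_nonneg (sub_nonneg.2 hyη) (by linarith : (0 : ℝ) ≤ etaMax Z S + ‖etaI Z S i‖ + 1)]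

lemma one_le_fScaleBranch_one (hxe : xiMax Z S - etaMax Z S = 1) {i : Fin n}
    (hi : xiI Z S i = xiMax Z S) : 1 ≤ fScaleBranch Z S i 1 := by
  have hy := norm_nonneg (etaI Z S i)
  have hyη := norm_etaI_le_etaMax Z S i
  have hre := neg_norm_etaI_le_re Z S i
  rw [fScaleBranch, hi, show xiMax Z S = 1 + etaMax Z S by linarith]
  nlinarith [mul_nonneg (sub_nonneg.2 hyη) (by linarith : (0 : ℝ) ≤ etaMax Z S + ‖etaI Z S i‖ + 2)]

end

theorem stress_increasing_along_loading_general {n : ℕ} (hn : 1 ≤ n)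
    (Z : Matrix (Fin n) (Fin n) ℂ)
    (S : Fin n → ℂ) (hxe : xiMax Z S - etaMax Z S = 1) :
    (∀ l1 l2 : ℝ, 0 ≤ l1 → l1 ≤ l2 → l2 ≤ 1 → fScale Z S l1 ≤ fScale Z S l2) ∧
    1 ≤ fScale Z S 1 := by
  have : Nonempty (Fin n) := ⟨⟨0, hn⟩⟩
  have hf : fScale Z S = fun l => ⨆ i, fScaleBranch Z S i l :=
    funext (fScale_eq_iSup_fScaleBranch Z S)
  refine ⟨fun l1 l2 h1 h12 h2 => ?_, ?_⟩
  · rw [hf]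
    exact MonotoneOn.ciSup (monotoneOn_fScaleBranch hxe)
      ⟨h1, h12.trans h2⟩ ⟨h1.trans h12, h2⟩ h12
  · obtain ⟨i, hi⟩ := Finite.exists_max (xiI Z S)
    rw [hf]
    exact (one_le_fScaleBranch_one hxe (le_antisymm (xiI_le_xiMax Z S i) (ciSup_le hi))).trans
      (le_ciSup (f := (fScaleBranch Z S · 1)) (Set.finite_range _).bddAbove i)

/-- if `ξ − η = 1`, then `f(λ) = γ(λS) + 2λ²ξη` is monotonically
nondecreasing on `[0, 1]` and `f(1) ≥ 1`. -/
theorem stress_increasing_along_loading {n : ℕ} (hn : 1 ≤ n)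
    (Z : Matrix (Fin n) (Fin n) ℂ) (hZ : IsUnit Z.det)
    (S : Fin n → ℂ) (hxe : xiMax Z S - etaMax Z S = 1) :
    (∀ l1 l2 : ℝ, 0 ≤ l1 → l1 ≤ l2 → l2 ≤ 1 → fScale Z S l1 ≤ fScale Z S l2) ∧
    1 ≤ fScale Z S 1 :=
  stress_increasing_along_loading_general hn Z S hxe
end

section
/- If sqrt(ξ) + sqrt(η) ≤ 1, then γ + 2ξη ≤ 1 and ξ − η ≤ 1. Consequently, the solvability set certified by the condition of Dvijotham et al., S_d = {S ∈ ℂ^n : sqrt(ξ) + sqrt(η) ≤ 1}, is contained in the set {S ∈ ℂ^n : γ + 2ξη ≤ 1 and ξ − η ≤ 1} (the closed version of the proposed condition). -/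
open Complex

/-! With `s = √ξ` and `t = √η` one has the factorization
`1 - (2ξ - ξ² + 2η - η² + 2ξη) = (1 - (s + t)²) (1 - (s - t)²)`, so `s + t ≤ 1` makes the
left side nonnegative. It bounds `γ + 2ξη` because `t ↦ 2t - t²` is increasing on `t ≤ 1` and
`Re η_i ≤ |η_i|`, whence `γ_i ≤ (2ξ_i - ξ_i²) + (2|η_i| - |η_i|²) ≤ (2ξ - ξ²) + (2η - η²)`. -/

lemma two_mul_sub_sq_le_two_mul_sub_sq {a b : ℝ} (hab : a ≤ b) (hb : b ≤ 1) :
    2 * a - a ^ 2 ≤ 2 * b - b ^ 2 := by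
  nlinarith

lemma two_mul_sub_sq_nonneg {a : ℝ} (ha₀ : 0 ≤ a) (ha₁ : a ≤ 1) : 0 ≤ 2 * a - a ^ 2 := by
  nlinarith

lemma two_mul_sub_sq_add_two_mul_sub_sq_add_two_mul_mul_le_one {x y : ℝ} (hx : 0 ≤ x)
    (hy : 0 ≤ y) (h : √x + √y ≤ 1) :
    (2 * x - x ^ 2) + (2 * y - y ^ 2) + 2 * x * y ≤ 1 := by
  have hs : 0 ≤ √x := Real.sqrt_nonneg x
  have ht : 0 ≤ √y := Real.sqrt_nonneg y
  rw [← Real.sq_sqrt hx, ← Real.sq_sqrt hy]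
  generalize √x = s at *
  generalize √y = t at *
  have hsum : 0 ≤ 1 - (s + t) ^ 2 := by nlinarith
  have hdiff : 0 ≤ 1 - (s - t) ^ 2 := by nlinarith [mul_nonneg hs ht]
  have hfactor : 1 - ((2 * s ^ 2 - (s ^ 2) ^ 2) + (2 * t ^ 2 - (t ^ 2) ^ 2) + 2 * s ^ 2 * t ^ 2)
      = (1 - (s + t) ^ 2) * (1 - (s - t) ^ 2) := by ring
  linarith [mul_nonneg hsum hdiff]

section PerBus

variable {n : ℕ} (Z : Matrix (Fin n) (Fin n) ℂ) (S : Fin n → ℂ)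

lemma gammaI_le (i : Fin n) :
    gammaI Z S i ≤ (2 * xiI Z S i - xiI Z S i ^ 2) + (2 * ‖etaI Z S i‖ - ‖etaI Z S i‖ ^ 2) := by
  have := Complex.re_le_norm (etaI Z S i)
  unfold gammaI
  linarith

lemma etaMax_nonneg : 0 ≤ etaMax Z S :=
  Real.iSup_nonneg fun _ => norm_nonneg _

lemma xiMax_nonneg : 0 ≤ xiMax Z S :=
  Real.iSup_nonneg (xiI_nonneg Z S)

lemma gammaMax_le (hξ : xiMax Z S ≤ 1) (hη : etaMax Z S ≤ 1) :
    gammaMax Z S ≤ (2 * xiMax Z S - xiMax Z S ^ 2) + (2 * etaMax Z S - etaMax Z S ^ 2) := by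
  refine Real.iSup_le (fun i => (gammaI_le Z S i).trans ?_) ?_
  · exact add_le_add (two_mul_sub_sq_le_two_mul_sub_sq (xiI_le_xiMax Z S i) hξ)
      (two_mul_sub_sq_le_two_mul_sub_sq (norm_etaI_le_etaMax Z S i) hη)
  · exact add_nonneg (two_mul_sub_sq_nonneg (xiMax_nonneg Z S) hξ)
      (two_mul_sub_sq_nonneg (etaMax_nonneg Z S) hη)

end PerBus

theorem dvijotham_condition_implies_proposed_general {n : ℕ}
    (Z : Matrix (Fin n) (Fin n) ℂ) :
    (∀ S : Fin n → ℂ, Real.sqrt (xiMax Z S) + Real.sqrt (etaMax Z S) ≤ 1 →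
      gammaMax Z S + 2 * xiMax Z S * etaMax Z S ≤ 1 ∧ xiMax Z S - etaMax Z S ≤ 1) ∧
    {S : Fin n → ℂ | Real.sqrt (xiMax Z S) + Real.sqrt (etaMax Z S) ≤ 1} ⊆
      {S : Fin n → ℂ |
        gammaMax Z S + 2 * xiMax Z S * etaMax Z S ≤ 1 ∧ xiMax Z S - etaMax Z S ≤ 1} := by
  have key : ∀ S : Fin n → ℂ, Real.sqrt (xiMax Z S) + Real.sqrt (etaMax Z S) ≤ 1 →
      gammaMax Z S + 2 * xiMax Z S * etaMax Z S ≤ 1 ∧ xiMax Z S - etaMax Z S ≤ 1 := by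
    intro S hS
    have hξ₀ := xiMax_nonneg Z S
    have hη₀ := etaMax_nonneg Z S
    have hξ₁ : xiMax Z S ≤ 1 :=
      Real.sqrt_le_one.mp (le_of_add_le_of_nonneg_left hS (Real.sqrt_nonneg _))
    have hη₁ : etaMax Z S ≤ 1 :=
      Real.sqrt_le_one.mp (le_of_add_le_of_nonneg_right hS (Real.sqrt_nonneg _))
    have hγ := gammaMax_le Z S hξ₁ hη₁
    have hquad := two_mul_sub_sq_add_two_mul_sub_sq_add_two_mul_mul_le_one hξ₀ hη₀ hS
    exact ⟨by linarith, by linarith⟩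
  exact ⟨key, key⟩

/-- `sqrt ξ + sqrt η ≤ 1` implies `γ + 2ξη ≤ 1` and `ξ − η ≤ 1`;
consequently the solvability set of Dvijotham et al. is contained in the closed
version of the proposed solvability set. -/
theorem dvijotham_condition_implies_proposed {n : ℕ} (hn : 1 ≤ n)
    (Z : Matrix (Fin n) (Fin n) ℂ) (hZ : IsUnit Z.det) :
    (∀ S : Fin n → ℂ, Real.sqrt (xiMax Z S) + Real.sqrt (etaMax Z S) ≤ 1 →
      gammaMax Z S + 2 * xiMax Z S * etaMax Z S ≤ 1 ∧ xiMax Z S - etaMax Z S ≤ 1) ∧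
    {S : Fin n → ℂ | Real.sqrt (xiMax Z S) + Real.sqrt (etaMax Z S) ≤ 1} ⊆
      {S : Fin n → ℂ |
        gammaMax Z S + 2 * xiMax Z S * etaMax Z S ≤ 1 ∧ xiMax Z S - etaMax Z S ≤ 1} :=
  dvijotham_condition_implies_proposed_general Z
end
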